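/- Let Z ~ Beta(r, n-r+1) with positive integers 1 < r ≤ n. Then E[log(-log(1-Z))] = (1/B(r, n-r+1)) · Σ_{j=0}^{r-1} C(r-1, j) (-1)^j · (-1/(n-r+1+j)) · (C + log(n-r+1+j)), where C is the Euler–Mascheroni constant. -/

import Mathlib

open Real MeasureTheory Set

/-!
Substituting `z = 1 - e^{-t}` turns `∫₀¹ log (-log (1 - z)) (1 - z)^k dz` into the Laplace
transform `∫₀^∞ log t · e^{-(k+1) t} dt`, which by scaling reduces to
`∫₀^∞ log t · e^{-t} dt = Γ'(1) = -γ`. Expanding `z^(r-1) = (1 - (1 - z))^(r-1)` binomially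
writes the Beta moment as a finite sum of such integrals.
-/

theorem abs_log_le_two_mul_rpow_half_add_rpow_neg_half {t : ℝ} (ht : 0 < t) :
    |log t| ≤ 2 * (t ^ (1 / 2 : ℝ) + t ^ (-(1 / 2) : ℝ)) := by
  have hpos := rpow_pos_of_pos ht (1 / 2 : ℝ)
  have hneg := rpow_pos_of_pos ht (-(1 / 2) : ℝ)
  have hle := log_le_rpow_div ht.le (by norm_num : (0 : ℝ) < 1 / 2)
  have hle_inv := log_le_rpow_div (inv_nonneg.2 ht.le) (by norm_num : (0 : ℝ) < 1 / 2)
  rw [log_inv, inv_rpow ht.le, ← rpow_neg ht.le] at hle_inv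
  rw [abs_le]
  constructor <;> linarith

theorem integrableOn_log_mul_exp_neg_mul {b : ℝ} (hb : 0 < b) :
    IntegrableOn (fun t => log t * exp (-(b * t))) (Ioi 0) := by
  have hbound : IntegrableOn
      (fun t => 2 * (t ^ (1 / 2 : ℝ) + t ^ (-(1 / 2) : ℝ)) * exp (-(b * t))) (Ioi 0) := by
    have h := ((integrableOn_rpow_mul_exp_neg_mul_rpow (s := 1 / 2) (by norm_num) one_pos hb).add
      (integrableOn_rpow_mul_exp_neg_mul_rpow (s := -(1 / 2)) (by norm_num) one_pos hb)).const_mul 2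
    refine IntegrableOn.congr_fun h (fun t _ => ?_) measurableSet_Ioi
    simp only [Pi.add_apply, rpow_one, neg_mul]
    ring
  refine hbound.mono' (measurable_log.mul (by fun_prop)).aestronglyMeasurable ?_
  filter_upwards [ae_restrict_mem measurableSet_Ioi] with t ht
  rw [norm_mul, norm_of_nonneg (exp_pos _).le]
  exact mul_le_mul_of_nonneg_right (abs_log_le_two_mul_rpow_half_add_rpow_neg_half ht)
    (exp_pos _).le

theorem integral_log_mul_exp_neg :
    ∫ t in Ioi (0 : ℝ), log t * exp (-t) = -eulerMascheroniConstant := by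
  have hGamma_eq : Complex.Gamma =ᶠ[nhds 1] Complex.GammaIntegral := by
    filter_upwards [Complex.continuous_re.isOpen_preimage _ isOpen_Ioi |>.mem_nhds
      (by norm_num : (1 : ℂ).re ∈ Ioi 0)] with s hs
    exact Complex.Gamma_eq_integral hs
  have hderiv := (Complex.hasDerivAt_Gamma_one.congr_of_eventuallyEq hGamma_eq.symm).unique
    (Complex.hasDerivAt_GammaIntegral (s := 1) (by norm_num))
  have hofReal : ∫ t : ℝ in Ioi 0, (t : ℂ) ^ ((1 : ℂ) - 1) * (log t * exp (-t)) =
      ((∫ t in Ioi (0 : ℝ), log t * exp (-t) : ℝ) : ℂ) := by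
    refine Eq.trans ?_ integral_ofReal
    refine setIntegral_congr_fun measurableSet_Ioi fun t _ => ?_
    simp
  rw [hofReal] at hderiv
  exact_mod_cast hderiv.symm

theorem integral_log_mul_exp_neg_mul {b : ℝ} (hb : 0 < b) :
    ∫ t in Ioi (0 : ℝ), log t * exp (-(b * t)) = -(eulerMascheroniConstant + log b) / b := by
  have hlog : ∀ t ∈ Ioi (0 : ℝ),
      log t * exp (-(b * t)) = (log (b * t) - log b) * exp (-(b * t)) := fun t ht => by
    rw [log_mul hb.ne' (ne_of_gt ht)]
    ring
  have hsplit : ∫ u in Ioi (0 : ℝ), (log u - log b) * exp (-u) =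
      (∫ u in Ioi (0 : ℝ), log u * exp (-u)) - log b * ∫ u in Ioi (0 : ℝ), exp (-u) := by
    simp_rw [sub_mul]
    rw [integral_sub, integral_const_mul]
    · have h := integrableOn_log_mul_exp_neg_mul one_pos
      simp only [one_mul] at h
      exact h
    · simpa only [neg_mul, one_mul] using (exp_neg_integrableOn_Ioi 0 one_pos).const_mul (log b)
  rw [setIntegral_congr_fun measurableSet_Ioi hlog,
    integral_comp_mul_left_Ioi (fun u => (log u - log b) * exp (-u)) 0 hb, mul_zero, hsplit,
    integral_log_mul_exp_neg, integral_exp_neg_Ioi_zero, smul_eq_mul]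
  field_simp
  ring

theorem image_one_sub_exp_neg_Ioi : (fun t => 1 - exp (-t)) '' Ioi 0 = Ioo (0 : ℝ) 1 := by
  ext z
  constructor
  · rintro ⟨t, ht, rfl⟩
    have hlt : exp (-t) < 1 := exp_lt_one_iff.mpr (neg_neg_iff_pos.mpr ht)
    exact ⟨by linarith, by linarith [exp_pos (-t)]⟩
  · rintro ⟨hz0, hz1⟩
    refine ⟨-log (1 - z), neg_pos.mpr (log_neg (by linarith) (by linarith)), ?_⟩
    simp [exp_log (show 0 < 1 - z by linarith)]

theorem strictMono_one_sub_exp_neg : StrictMono fun t : ℝ => 1 - exp (-t) :=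
  fun _ _ h => sub_lt_sub_left (exp_lt_exp.mpr (neg_lt_neg h)) 1

theorem hasDerivAt_one_sub_exp_neg (t : ℝ) : HasDerivAt (fun t => 1 - exp (-t)) (exp (-t)) t := by
  simpa using ((hasDerivAt_neg t).exp).const_sub 1

theorem integrableOn_Ioo_zero_one_iff_comp_one_sub_exp_neg (f : ℝ → ℝ) :
    IntegrableOn f (Ioo 0 1) ↔ IntegrableOn (fun t => exp (-t) * f (1 - exp (-t))) (Ioi 0) := by
  rw [← image_one_sub_exp_neg_Ioi, integrableOn_image_iff_integrableOn_abs_deriv_smul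
    measurableSet_Ioi (fun t _ => (hasDerivAt_one_sub_exp_neg t).hasDerivWithinAt)
    strictMono_one_sub_exp_neg.injective.injOn]
  simp only [abs_of_pos (exp_pos _), smul_eq_mul]

theorem integral_Ioo_zero_one_eq_integral_comp_one_sub_exp_neg (f : ℝ → ℝ) :
    ∫ z in Ioo 0 1, f z = ∫ t in Ioi 0, exp (-t) * f (1 - exp (-t)) := by
  rw [← image_one_sub_exp_neg_Ioi, integral_image_eq_integral_abs_deriv_smul
    measurableSet_Ioi (fun t _ => (hasDerivAt_one_sub_exp_neg t).hasDerivWithinAt)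
    strictMono_one_sub_exp_neg.injective.injOn]
  simp only [abs_of_pos (exp_pos _), smul_eq_mul]

theorem exp_neg_mul_log_neg_log_one_sub_mul_one_sub_pow_comp (k : ℕ) (t : ℝ) :
    exp (-t) * (log (-log (1 - (1 - exp (-t)))) * (1 - (1 - exp (-t))) ^ k) =
      log t * exp (-((k + 1) * t)) := by
  rw [sub_sub_cancel, log_exp, neg_neg, ← exp_nat_mul, mul_left_comm, ← exp_add]
  ring_nf

theorem integrableOn_log_neg_log_one_sub_mul_one_sub_pow (k : ℕ) :
    IntegrableOn (fun z => log (-log (1 - z)) * (1 - z) ^ k) (Ioo 0 1) := by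
  rw [integrableOn_Ioo_zero_one_iff_comp_one_sub_exp_neg]
  simpa only [exp_neg_mul_log_neg_log_one_sub_mul_one_sub_pow_comp] using
    integrableOn_log_mul_exp_neg_mul (b := k + 1) (by positivity)

theorem integral_log_neg_log_one_sub_mul_one_sub_pow (k : ℕ) :
    ∫ z in Ioo 0 1, log (-log (1 - z)) * (1 - z) ^ k =
      -(eulerMascheroniConstant + log (k + 1)) / (k + 1) := by
  rw [integral_Ioo_zero_one_eq_integral_comp_one_sub_exp_neg]
  simpa only [exp_neg_mul_log_neg_log_one_sub_mul_one_sub_pow_comp] using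
    integral_log_mul_exp_neg_mul (b := k + 1) (by positivity)

theorem pow_eq_sum_choose_mul_neg_one_pow_mul_one_sub_pow {R : Type*} [CommRing R]
    (x : R) (m : ℕ) :
    x ^ m = ∑ j ∈ Finset.range (m + 1), (m.choose j : R) * (-1) ^ j * (1 - x) ^ j := by
  conv_lhs => rw [← sub_sub_cancel 1 x, sub_eq_neg_add, add_pow]
  refine Finset.sum_congr rfl fun j _ => ?_
  rw [neg_pow, one_pow]
  ring

theorem integral_log_neg_log_one_sub_mul_pow_mul_one_sub_pow (m k : ℕ) :
    ∫ z in Ioo 0 1, log (-log (1 - z)) * (z ^ m * (1 - z) ^ k) =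
      ∑ j ∈ Finset.range (m + 1), (m.choose j : ℝ) * (-1) ^ j *
        (-(eulerMascheroniConstant + log ((k + j : ℕ) + 1)) / ((k + j : ℕ) + 1)) := by
  have hexpand : ∀ z : ℝ, log (-log (1 - z)) * (z ^ m * (1 - z) ^ k) =
      ∑ j ∈ Finset.range (m + 1),
        (m.choose j : ℝ) * (-1) ^ j * (log (-log (1 - z)) * (1 - z) ^ (k + j)) := fun z => by
    rw [pow_eq_sum_choose_mul_neg_one_pow_mul_one_sub_pow z m, Finset.sum_mul, Finset.mul_sum]
    refine Finset.sum_congr rfl fun j _ => ?_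
    ring
  simp_rw [hexpand]
  rw [integral_finsetSum _ fun j _ =>
    (integrableOn_log_neg_log_one_sub_mul_one_sub_pow (k + j)).const_mul _]
  refine Finset.sum_congr rfl fun j _ => ?_
  rw [integral_const_mul, integral_log_neg_log_one_sub_mul_one_sub_pow]

/-- For `Z ~ Beta(r, n-r+1)` with `1 < r ≤ n`,
`E[log(-log(1-Z))]` equals the stated finite sum. -/
theorem beta_loglog_mean (n r : ℕ) (hr : 1 < r) (hrn : r ≤ n) :
    ∫ z in Set.Ioo (0 : ℝ) 1,
        Real.log (-Real.log (1 - z)) *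
          (z ^ (r - 1) * (1 - z) ^ (n - r) /
            (Real.Gamma r * Real.Gamma ((n : ℝ) - r + 1) / Real.Gamma ((n : ℝ) + 1))) =
      (1 / (Real.Gamma r * Real.Gamma ((n : ℝ) - r + 1) / Real.Gamma ((n : ℝ) + 1))) *
        ∑ j ∈ Finset.range r, ((r - 1).choose j : ℝ) * (-1 : ℝ) ^ j *
          (-1 / ((n : ℝ) - r + 1 + j)) *
          (Real.eulerMascheroniConstant + Real.log ((n : ℝ) - r + 1 + j)) := by
  have hsum := integral_log_neg_log_one_sub_mul_pow_mul_one_sub_pow (r - 1) (n - r)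
  rw [Nat.sub_add_cancel hr.le] at hsum
  simp_rw [← mul_div_assoc]
  rw [integral_div, hsum, div_eq_inv_mul, one_div]
  congr 1
  refine Finset.sum_congr rfl fun j _ => ?_
  have hcast : ((n - r + j : ℕ) : ℝ) + 1 = n - r + 1 + j := by
    push_cast [Nat.cast_sub hrn]
    ring
  rw [hcast]
  ring
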